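/- arXiv:1804.01026 — 4 statements merged into one kernel-verified Lean document; each statement's English description precedes it below -/
import Mathlib

section
/- If s < (d/(d−1))·k, then every (d,k,s)-cluster is a d-simplex; that is, the intersection of any d of the d+1 sets in the cluster is nonempty (while the intersection of all d+1 sets is empty). -/
open Finset

/-- If s < (d/(d−1))·k (i.e. (d−1)s < dk) and d ≥ 2, then every
(d,k,s)-cluster is a d-simplex: any d of the d+1 sets have nonempty intersection. -/
theorem stmt2 {n d k s : ℕ} (hd : 2 ≤ d)
    (A : Fin (d + 1) → Finset (Fin n))
    (hcard : ∀ i, (A i).card = k) (hinj : Function.Injective A)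
    (hint : univ.inf A = ∅) (hunion : (univ.sup A).card ≤ s)
    (hs : (d - 1) * s < d * k) :
    ∀ i : Fin (d + 1), ((univ.erase i).inf A).Nonempty := by
  intro i
  by_contra h
  rw [Finset.not_nonempty_iff_eq_empty] at h
  set U := univ.sup A with hU
  have hsub : ∀ j, A j ⊆ U := fun j => Finset.le_sup (mem_univ j)
  have hcardT : (univ.erase i).card = d := by
    rw [Finset.card_erase_of_mem (mem_univ i), Finset.card_univ, Fintype.card_fin]
    omega
  have hcount : ∀ x ∈ U, ((univ.erase i).filter (fun j => x ∈ A j)).card ≤ d - 1 := by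
    intro x hx
    by_contra hc
    push_neg at hc
    have hle : (univ.erase i).filter (fun j => x ∈ A j) = univ.erase i := by
      apply Finset.eq_of_subset_of_card_le (Finset.filter_subset _ _)
      rw [hcardT]; omega
    have hxin : x ∈ (univ.erase i).inf A := by
      rw [Finset.mem_inf]
      intro j hj
      have hj2 : j ∈ (univ.erase i).filter (fun j => x ∈ A j) := by
        rw [hle]; exact hj
      exact (Finset.mem_filter.mp hj2).2
    rw [h] at hxin
    exact absurd hxin (Finset.notMem_empty x)
  have hsum : ∑ j ∈ univ.erase i, (A j).card ≤ (d - 1) * U.card := by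
    calc ∑ j ∈ univ.erase i, (A j).card
        = ∑ j ∈ univ.erase i, (U.filter (fun x => x ∈ A j)).card := by
          refine Finset.sum_congr rfl fun j _ => ?_
          congr 1
          rw [Finset.filter_mem_eq_inter, Finset.inter_eq_right.mpr (hsub j)]
      _ = ∑ j ∈ univ.erase i, ∑ x ∈ U, if x ∈ A j then 1 else 0 := by
          simp only [Finset.card_filter]
      _ = ∑ x ∈ U, ∑ j ∈ univ.erase i, if x ∈ A j then 1 else 0 := Finset.sum_comm
      _ = ∑ x ∈ U, ((univ.erase i).filter (fun j => x ∈ A j)).card := by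
          simp only [Finset.card_filter]
      _ ≤ ∑ x ∈ U, (d - 1) := Finset.sum_le_sum hcount
      _ = U.card * (d - 1) := by rw [Finset.sum_const, smul_eq_mul]
      _ = (d - 1) * U.card := Nat.mul_comm _ _
  have hsum2 : ∑ j ∈ univ.erase i, (A j).card = d * k := by
    rw [Finset.sum_congr rfl fun j _ => hcard j, Finset.sum_const, hcardT, smul_eq_mul]
  have : (d - 1) * U.card ≤ (d - 1) * s := Nat.mul_le_mul_left _ hunion
  omega
end

section
/- Partition [n] into k sets X_1,...,X_k of equal size n/k (assume k divides n), and let G be the family of all k-element subsets of [n] intersecting each X_i in exactly one element. Then G contains no (d,k,s)-cluster for any s < 2k, and |G| = (n/k)^k. -/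
open Finset

/-- Partition [n] into k blocks of size n/k and let G be the family
of k-sets meeting each block in exactly one element. Then any d+1 sets of G with
empty total intersection have union of size ≥ 2k (so G has no (d,k,s)-cluster for
s < 2k), and |G| = (n/k)^k. -/
theorem stmt5 {n k d : ℕ} (hk : 0 < k) (hdvd : k ∣ n) (hd : 1 ≤ d)
    (X : Fin k → Finset (Fin n)) (hXcard : ∀ i, (X i).card = n / k)
    (hdisj : ∀ i j, i ≠ j → Disjoint (X i) (X j))
    (hcover : univ.sup X = univ)
    (G : Finset (Finset (Fin n)))
    (hG : G = (powersetCard k (univ : Finset (Fin n))).filter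
      (fun A => ∀ i, (A ∩ X i).card = 1)) :
    (∀ A : Fin (d + 1) → Finset (Fin n), (∀ i, A i ∈ G) → univ.inf A = ∅ →
        2 * k ≤ (univ.sup A).card) ∧
      G.card = (n / k) ^ k := by
  -- block decomposition of cardinality
  have hdecomp : ∀ A : Finset (Fin n), A.card = ∑ i, (A ∩ X i).card := by
    intro A
    have hA : A = univ.biUnion (fun i => A ∩ X i) := by
      ext x
      simp only [mem_biUnion, mem_univ, true_and, mem_inter]
      constructor
      · intro hx
        have : x ∈ univ.sup X := by rw [hcover]; exact mem_univ x
        rw [Finset.mem_sup] at this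
        obtain ⟨i, -, hi⟩ := this
        exact ⟨i, hx, hi⟩
      · rintro ⟨i, hx, -⟩; exact hx
    conv_lhs => rw [hA]
    exact card_biUnion (fun i _ j _ hij =>
      Finset.disjoint_of_subset_left inter_subset_right
        (Finset.disjoint_of_subset_right inter_subset_right (hdisj i j hij)))
  have hGmem : ∀ B ∈ G, (∀ i, (B ∩ X i).card = 1) ∧ B.card = k := by
    intro B hB
    rw [hG, mem_filter, mem_powersetCard] at hB
    exact ⟨hB.2, hB.1.2⟩
  constructor
  · -- part 1
    intro A hA hinf
    have key : ∀ j : Fin k, 2 ≤ ((univ.sup A) ∩ X j).card := by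
      intro j
      by_contra h
      push_neg at h
      -- each A i ∩ X j = {a i}, all a i are in sup A ∩ X j, which has card ≤ 1
      have hai : ∀ i : Fin (d + 1), ∃ a, A i ∩ X j = {a} := by
        intro i
        exact card_eq_one.mp ((hGmem (A i) (hA i)).1 j)
      obtain ⟨a, ha⟩ := hai 0
      have haall : ∀ i : Fin (d + 1), a ∈ A i := by
        intro i
        obtain ⟨b, hb⟩ := hai i
        have hamem : a ∈ (univ.sup A) ∩ X j := by
          rw [mem_inter]
          have : a ∈ A 0 ∩ X j := by rw [ha]; exact mem_singleton_self a
          rw [mem_inter] at this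
          exact ⟨Finset.mem_sup.mpr ⟨0, mem_univ _, this.1⟩, this.2⟩
        have hbmem : b ∈ (univ.sup A) ∩ X j := by
          rw [mem_inter]
          have : b ∈ A i ∩ X j := by rw [hb]; exact mem_singleton_self b
          rw [mem_inter] at this
          exact ⟨Finset.mem_sup.mpr ⟨i, mem_univ _, this.1⟩, this.2⟩
        have hab : a = b := by
          by_contra hne
          have : 2 ≤ ((univ.sup A) ∩ X j).card := by
            have := Finset.one_lt_card.mpr ⟨a, hamem, b, hbmem, hne⟩
            omega
          omega
        have : a ∈ A i ∩ X j := by rw [hb, hab]; exact mem_singleton_self b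
        exact (mem_inter.mp this).1
      have : a ∈ univ.inf A := Finset.mem_inf.mpr (fun i _ => haall i)
      rw [hinf] at this
      exact absurd this (notMem_empty a)
    calc 2 * k = ∑ _j : Fin k, 2 := by simp [mul_comm]
      _ ≤ ∑ j, ((univ.sup A) ∩ X j).card := Finset.sum_le_sum (fun j _ => key j)
      _ = (univ.sup A).card := (hdecomp _).symm
  · -- part 2: bijection with piFinset
    have hcard : G.card = (Fintype.piFinset (fun i : Fin k => X i)).card := by
      symm
      apply Finset.card_bij (fun f _ => Finset.image f univ)
      · -- maps into G
        intro f hf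
        rw [Fintype.mem_piFinset] at hf
        have hint : ∀ i, (Finset.image f univ) ∩ X i = {f i} := by
          intro i
          ext x
          simp only [mem_inter, mem_image, mem_univ, true_and, mem_singleton]
          constructor
          · rintro ⟨⟨j, rfl⟩, hx⟩
            by_cases hij : j = i
            · rw [hij]
            · exact absurd (Finset.mem_inter.mpr ⟨hf j, hx⟩ : f j ∈ X j ∩ X i)
                (by simp [Finset.disjoint_left.mp (hdisj j i hij) (hf j)])
          · rintro rfl; exact ⟨⟨i, rfl⟩, hf i⟩
        rw [hG, mem_filter, mem_powersetCard]
        refine ⟨⟨subset_univ _, ?_⟩, fun i => by rw [hint i]; simp⟩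
        rw [hdecomp]
        simp [hint]
      · -- injective
        intro f hf g hg hfg
        rw [Fintype.mem_piFinset] at hf hg
        funext i
        have : f i ∈ Finset.image g univ := by
          rw [← hfg]; exact mem_image_of_mem f (mem_univ i)
        obtain ⟨j, -, hj⟩ := mem_image.mp this
        by_cases hij : j = i
        · rw [← hj, hij]
        · exact absurd (hf i) (Finset.disjoint_left.mp (hdisj j i hij) (hj ▸ hg j))
      · -- surjective
        intro B hB
        obtain ⟨h1, h2⟩ := hGmem B hB
        choose a ha using fun i => card_eq_one.mp (h1 i)
        refine ⟨a, ?_, ?_⟩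
        · rw [Fintype.mem_piFinset]
          intro i
          have : a i ∈ B ∩ X i := by rw [ha i]; exact mem_singleton_self _
          exact (mem_inter.mp this).2
        · have hsub : Finset.image a univ ⊆ B := by
            intro x hx
            obtain ⟨i, -, rfl⟩ := mem_image.mp hx
            have : a i ∈ B ∩ X i := by rw [ha i]; exact mem_singleton_self _
            exact (mem_inter.mp this).1
          apply Finset.eq_of_subset_of_card_le hsub
          rw [h2]
          have hcardim : (Finset.image a univ).card = k := by
            rw [hdecomp]
            have : ∀ i, (Finset.image a univ) ∩ X i = {a i} := by
              intro i
              apply Finset.Subset.antisymm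
              · intro x hx
                rw [mem_inter, mem_image] at hx
                obtain ⟨⟨j, -, rfl⟩, hxi⟩ := hx
                have haj : a j ∈ X j := by
                  have : a j ∈ B ∩ X j := by rw [ha j]; exact mem_singleton_self _
                  exact (mem_inter.mp this).2
                by_cases hij : j = i
                · rw [hij]; exact mem_singleton_self _
                · exact absurd (Finset.mem_inter.mpr ⟨haj, hxi⟩ : a j ∈ X j ∩ X i)
                    (by simp [Finset.disjoint_left.mp (hdisj j i hij) haj])
              · intro x hx
                rw [mem_singleton] at hx
                subst hx
                have : a i ∈ B ∩ X i := by rw [ha i]; exact mem_singleton_self _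
                exact mem_inter.mpr ⟨mem_image_of_mem a (mem_univ i), (mem_inter.mp this).2⟩
            simp [this]
          omega
    rw [hcard, Fintype.card_piFinset]
    simp [hXcard]
end

section
/- Let k < l < n and ε > 0, and let F be a family of k-element subsets of [n] with |F| ≥ (1−ε)·C(n−1,k−1). Then the upper shadow G = F^{↑l} satisfies |G| ≥ (1−ε)·C(n−1,l−1). -/
/-!
`F^{↑l}` is the `(l - k)`-fold upper shadow of `F`, and `A ↦ Aᶜ` turns it into the
`(l - k)`-fold lower shadow of the `(n - k)`-uniform family `Fᶜˢ`; since
`C(n-1, k-1) = C(n-1, n-k)`, it suffices to show that one lower-shadow step from `r`-sets does not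
decrease the ratio `|𝒜| / C(n-1, r)` as long as it is at most `1`. By Kruskal–Katona we may
replace `𝒜` by the colex initial segment `𝒞` of size `min |𝒜| C(n-1, r)`. As the `r`-subsets of
`[n-1]` are themselves a colex initial segment of size `C(n-1, r)`, `𝒞` lives on the ground set
`[n-1]`, where the local LYM inequality gives `|∂𝒞| / C(n-1, r-1) ≥ |𝒞| / C(n-1, r)`.
-/

open Finset
open scoped FinsetFamily

namespace Finset

section LocalLYM
variable {α : Type*} [DecidableEq α] {𝒜 : Finset (Finset α)} {r : ℕ}

theorem card_mul_le_card_shadow_mul_of_subset {X : Finset α} (h𝒜 : (𝒜 : Set (Finset α)).Sized r)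
    (h𝒜X : ∀ s ∈ 𝒜, s ⊆ X) : #𝒜 * r ≤ #(∂ 𝒜) * (#X - r + 1) := by
  refine card_mul_le_card_mul' (· ⊆ ·) (fun s hs => ?_) (fun t ht => ?_)
  · rw [← h𝒜 hs, ← card_image_of_injOn s.erase_injOn]
    refine card_le_card ?_
    simp_rw [image_subset_iff, mem_bipartiteBelow]
    exact fun a ha => ⟨erase_mem_shadow hs ha, erase_subset _ _⟩
  · obtain ⟨u, hu, htu, hut⟩ := mem_shadow_iff_exists_mem_card_add_one.1 ht
    rw [h𝒜 hu] at hut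
    have hsub : 𝒜.bipartiteAbove (· ⊆ ·) t ⊆ (X \ t).image (insert · t) := by
      intro s hs
      rw [mem_bipartiteAbove] at hs
      obtain ⟨a, ha, rfl⟩ := exists_eq_insert_iff.2 ⟨hs.2, by rw [h𝒜 hs.1, hut]⟩
      exact mem_image_of_mem _ (mem_sdiff.2 ⟨h𝒜X _ hs.1 (mem_insert_self a t), ha⟩)
    calc #(𝒜.bipartiteAbove (· ⊆ ·) t) ≤ #(X \ t) := (card_le_card hsub).trans card_image_le
      _ = #X - #t := card_sdiff_of_subset (htu.trans (h𝒜X u hu))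
      _ ≤ #X - r + 1 := by omega

end LocalLYM

namespace Colex
variable {α : Type*} [LinearOrder α]

lemma isInitSeg_powersetCard_Iio [LocallyFiniteOrderBot α] (a : α) (r : ℕ) :
    IsInitSeg (powersetCard r (Iio a)) r := by
  refine ⟨Set.sized_powersetCard _ _, fun s t hs ⟨hts, htr⟩ => ?_⟩
  rw [mem_powersetCard] at hs ⊢
  refine ⟨fun x hx => ?_, htr⟩
  obtain ⟨y, hys, hyt, hmax⟩ := toColex_lt_toColex_iff_exists_forall_lt.1 hts
  by_contra hxa
  have hxs : x ∉ s := fun hxs => hxa (hs.1 hxs)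
  exact hxa (mem_Iio.2 ((hmax x hx hxs).trans (mem_Iio.1 (hs.1 hys))))

lemma IsInitSeg.exists_subset_card_eq {𝒟 : Finset (Finset α)} {r m : ℕ} (h : IsInitSeg 𝒟 r)
    (hm : m ≤ #𝒟) : ∃ 𝒞 ⊆ 𝒟, IsInitSeg 𝒞 r ∧ #𝒞 = m := by
  induction 𝒟 using Finset.strongInduction with
  | H 𝒟 ih =>
    obtain rfl | hlt := hm.eq_or_lt
    · exact ⟨𝒟, subset_rfl, h, rfl⟩
    obtain ⟨M, hM, hmax⟩ := exists_max_image 𝒟 toColex (card_pos.1 (by omega))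
    have hM' : IsInitSeg (𝒟.erase M) r :=
      ⟨h.1.mono (erase_subset _ _), fun s t hs hts => mem_erase.2
        ⟨fun htM => (hts.1.trans_le (hmax s (mem_of_mem_erase hs))).ne (congrArg toColex htM),
          h.2 (mem_of_mem_erase hs) hts⟩⟩
    obtain ⟨𝒞, h𝒞, hinit, hcard⟩ :=
      ih _ (erase_ssubset hM) hM' (by rw [card_erase_of_mem hM]; omega)
    exact ⟨𝒞, h𝒞.trans (erase_subset _ _), hinit, hcard⟩

end Colex

theorem le_card_shadow_of_le_card {n r : ℕ} (hr : 0 < r) (hrn : r < n)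
    {𝒜 : Finset (Finset (Fin n))} (h𝒜 : (𝒜 : Set (Finset (Fin n))).Sized r) {c : ℝ} (hc : c ≤ 1)
    (h : c * (n - 1).choose r ≤ #𝒜) : c * (n - 1).choose (r - 1) ≤ #(∂ 𝒜) := by
  let last : Fin n := ⟨n - 1, by omega⟩
  have hX : #(Iio last) = n - 1 := Fin.card_Iio _
  obtain ⟨𝒞, h𝒞X, h𝒞, h𝒞card⟩ :=
    (Colex.isInitSeg_powersetCard_Iio last r).exists_subset_card_eq (min_le_right #𝒜 _)
  have hKK : #(∂ 𝒞) ≤ #(∂ 𝒜) := kruskal_katona h𝒜 (h𝒞card ▸ min_le_left _ _) h𝒞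
  have hLYM : #𝒞 * r ≤ #(∂ 𝒞) * (n - r) := by
    have := card_mul_le_card_shadow_mul_of_subset h𝒞.1 fun s hs => (mem_powersetCard.1 (h𝒞X hs)).1
    rwa [hX, show n - 1 - r + 1 = n - r by omega] at this
  have hc𝒞 : c * (n - 1).choose r ≤ #𝒞 := by
    rw [h𝒞card, card_powersetCard, hX, Nat.cast_min]
    exact le_min h (mul_le_of_le_one_left (Nat.cast_nonneg _) hc)
  have hchoose : (n - 1).choose r * r = (n - 1).choose (r - 1) * (n - r) := by
    obtain ⟨r, rfl⟩ := Nat.exists_eq_add_of_lt hr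
    simpa [show n - 1 - r = n - (r + 1) by omega] using Nat.choose_succ_right_eq (n - 1) r
  refine le_of_mul_le_mul_right ?_ (Nat.cast_pos.2 (Nat.sub_pos_of_lt hrn) : (0 : ℝ) < (n - r : ℕ))
  calc c * (n - 1).choose (r - 1) * (n - r : ℕ) = c * (n - 1).choose r * r := by
        rw [mul_assoc, mul_assoc, ← Nat.cast_mul, ← Nat.cast_mul, hchoose]
    _ ≤ #𝒞 * r := mul_le_mul_of_nonneg_right hc𝒞 (Nat.cast_nonneg _)
    _ ≤ #(∂ 𝒜) * (n - r : ℕ) := by exact_mod_cast hLYM.trans (Nat.mul_le_mul_right _ hKK)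

theorem le_card_shadow_iterate_of_le_card {n r t : ℕ} (htr : t ≤ r) (hrn : r < n)
    {𝒜 : Finset (Finset (Fin n))} (h𝒜 : (𝒜 : Set (Finset (Fin n))).Sized r) {c : ℝ} (hc : c ≤ 1)
    (h : c * (n - 1).choose r ≤ #𝒜) : c * (n - 1).choose (r - t) ≤ #(∂^[t] 𝒜) := by
  induction t with
  | zero => simpa using h
  | succ t ih =>
    rw [Function.iterate_succ_apply', show r - (t + 1) = r - t - 1 by omega]
    exact le_card_shadow_of_le_card (by omega) (by omega) h𝒜.shadow_iterate hc (ih (by omega))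

lemma shadow_iterate_compls {α : Type*} [DecidableEq α] [Fintype α] (𝒜 : Finset (Finset α))
    (t : ℕ) : ∂^[t] 𝒜ᶜˢ = (∂⁺^[t] 𝒜)ᶜˢ := by
  induction t with
  | zero => rfl
  | succ t ih => rw [Function.iterate_succ_apply', Function.iterate_succ_apply', ih, shadow_compls]

theorem le_card_upShadow_iterate_of_le_card {n k t : ℕ} (hk : 0 < k) (hkt : k + t ≤ n)
    {𝒜 : Finset (Finset (Fin n))} (h𝒜 : (𝒜 : Set (Finset (Fin n))).Sized k) {c : ℝ} (hc : c ≤ 1)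
    (h : c * (n - 1).choose (k - 1) ≤ #𝒜) : c * (n - 1).choose (k + t - 1) ≤ #(∂⁺^[t] 𝒜) := by
  have hsized : (𝒜ᶜˢ : Set (Finset (Fin n))).Sized (n - k) := by simpa using h𝒜.compls
  have := le_card_shadow_iterate_of_le_card (t := t) (by omega) (by omega) hsized hc
    (by rwa [card_compls, ← Nat.choose_symm_of_eq_add (by omega : n - 1 = (k - 1) + (n - k))])
  rwa [shadow_iterate_compls, card_compls,
    ← Nat.choose_symm_of_eq_add (by omega : n - 1 = (k + t - 1) + (n - k - t))] at this

theorem filter_exists_subset_eq_upShadow_iterate {α : Type*} [DecidableEq α] [Fintype α]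
    {𝒜 : Finset (Finset α)} {k l : ℕ} (h𝒜 : (𝒜 : Set (Finset α)).Sized k) (hkl : k ≤ l) :
    {t ∈ powersetCard l (univ : Finset α) | ∃ s ∈ 𝒜, s ⊆ t} = ∂⁺^[l - k] 𝒜 := by
  ext t
  simp only [mem_filter, mem_powersetCard, mem_upShadow_iterate_iff_exists_sdiff, subset_univ,
    true_and]
  constructor
  · rintro ⟨rfl, s, hs, hst⟩
    exact ⟨s, hs, hst, by rw [card_sdiff_of_subset hst, h𝒜 hs]⟩
  · rintro ⟨s, hs, hst, hcard⟩
    have hks : k ≤ #t := h𝒜 hs ▸ card_le_card hst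
    rw [card_sdiff_of_subset hst, h𝒜 hs] at hcard
    exact ⟨by omega, s, hs, hst⟩

end Finset

/-- If k < l < n, ε > 0 and |F| ≥ (1−ε)·C(n−1,k−1) for a family F
of k-subsets of [n], then |F^{↑l}| ≥ (1−ε)·C(n−1,l−1). -/
theorem stmt9 {n k l : ℕ} (hkl : k < l) (hln : l < n) (ε : ℝ) (hε : 0 < ε)
    (F : Finset (Finset (Fin n))) (hF : F ⊆ powersetCard k univ)
    (hcard : (1 - ε) * ((n - 1).choose (k - 1) : ℝ) ≤ (F.card : ℝ)) :
    (1 - ε) * ((n - 1).choose (l - 1) : ℝ) ≤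
      (((powersetCard l (univ : Finset (Fin n))).filter
        (fun B => ∃ A ∈ F, A ⊆ B)).card : ℝ) := by
  obtain rfl | hk := Nat.eq_zero_or_pos k
  -- `k - 1` truncates to `0`, so `hcard` reads `1 - ε ≤ #F` with `F ⊆ {∅}`.
  · rw [powersetCard_zero, subset_singleton_iff] at hF
    obtain rfl | rfl := hF
    · rw [card_empty, Nat.cast_zero, Nat.zero_sub, Nat.choose_zero_right, Nat.cast_one,
        mul_one] at hcard
      exact (mul_nonpos_of_nonpos_of_nonneg hcard (Nat.cast_nonneg _)).trans (Nat.cast_nonneg _)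
    · rw [filter_true_of_mem fun B _ => ⟨∅, mem_singleton_self _, empty_subset B⟩]
      calc (1 - ε) * ((n - 1).choose (l - 1) : ℝ) ≤ (n - 1).choose (l - 1) :=
            mul_le_of_le_one_left (Nat.cast_nonneg _) (by linarith)
        _ ≤ #(powersetCard l (univ : Finset (Fin n))) := by
            rw [card_powersetCard, card_univ, Fintype.card_fin,
              Nat.choose_eq_choose_pred_add (by omega) hkl]
            exact_mod_cast Nat.le_add_right _ _
  · rw [filter_exists_subset_eq_upShadow_iterate (subset_powersetCard_univ_iff.1 hF) hkl.le]
    have := le_card_upShadow_iterate_of_le_card hk (by omega : k + (l - k) ≤ n)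
      (subset_powersetCard_univ_iff.1 hF) (by linarith) hcard
    rwa [Nat.add_sub_cancel' hkl.le] at this
end

section
/- Let F ⊆ P([n]) be monotone, J ⊆ [n], G ⊆ P(J), q ∈ (0,1), and ε > 0. Suppose μ_q(F Δ ⟨G⟩) < ε²/16 and μ_q(F) ≤ 1 − ε/2, where ⟨G⟩ = {A : A ∩ J ∈ G}. Then μ_q(F_J^∅) < ε/4, where F_J^∅ = {A ⊆ [n]∖J : A ∈ F}. -/
open Finset

private lemma wsum_one (q : ℝ) {n : ℕ} (K : Finset (Fin n)) :
    ∑ B ∈ K.powerset, q ^ B.card * (1 - q) ^ (K.card - B.card) = 1 := by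
  have h := Finset.prod_add (fun _ : Fin n => q) (fun _ : Fin n => 1 - q) K
  simp only [prod_const] at h
  have h2 : ∀ t ∈ K.powerset, q ^ t.card * (1 - q) ^ (K \ t).card
      = q ^ t.card * (1 - q) ^ (K.card - t.card) := by
    intro t ht
    rw [card_sdiff_of_subset (mem_powerset.mp ht)]
  rw [Finset.sum_congr rfl h2] at h
  rw [← h]
  simp

private lemma key {n : ℕ} (q : ℝ) (hq0 : 0 ≤ q) (hq1 : q ≤ 1)
    (K : Finset (Fin n)) (S T U : Finset (Finset (Fin n)))
    (hS : ∀ A ∈ S, A ⊆ univ \ K) (hT : ∀ B ∈ T, B ⊆ K)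
    (hU : ∀ A ∈ S, ∀ B ∈ T, A ∪ B ∈ U) :
    (∑ A ∈ S, q ^ A.card * (1 - q) ^ ((n - K.card) - A.card)) *
      (∑ B ∈ T, q ^ B.card * (1 - q) ^ (K.card - B.card)) ≤
    ∑ A ∈ U, q ^ A.card * (1 - q) ^ (n - A.card) := by
  have h1q : (0:ℝ) ≤ 1 - q := by linarith
  have hKn : K.card ≤ n := by
    simpa using card_le_card (subset_univ K)
  have hcardsd : (univ \ K : Finset (Fin n)).card = n - K.card := by
    rw [card_sdiff_of_subset (subset_univ K)]; simp
  have hdisj : ∀ A ∈ S, ∀ B ∈ T, Disjoint A B := by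
    intro A hA B hB
    exact Finset.sdiff_disjoint.mono (hS A hA) (hT B hB)
  have hrec : ∀ p : Finset (Fin n) × Finset (Fin n), p ∈ S ×ˢ T →
      (p.1 ∪ p.2) ∩ K = p.2 ∧ (p.1 ∪ p.2) \ K = p.1 := by
    rintro ⟨A, B⟩ hp
    rw [mem_product] at hp
    have hA := hS A hp.1
    have hB := hT B hp.2
    have hAK : Disjoint A K := disjoint_left.mpr (fun a ha => (mem_sdiff.mp (hA ha)).2)
    constructor
    · rw [union_inter_distrib_right, disjoint_iff_inter_eq_empty.mp hAK,
        inter_eq_left.mpr hB, empty_union]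
    · rw [union_sdiff_distrib, sdiff_eq_empty_iff_subset.mpr hB,
        Finset.sdiff_eq_self_iff_disjoint.mpr hAK, union_empty]
  have hinj : ∀ p ∈ S ×ˢ T, ∀ p' ∈ S ×ˢ T,
      p.1 ∪ p.2 = p'.1 ∪ p'.2 → p = p' := by
    intro p hp p' hp' he
    have h1 := hrec p hp
    have h2 := hrec p' hp'
    ext1
    · rw [← h1.2, ← h2.2, he]
    · rw [← h1.1, ← h2.1, he]
  rw [Finset.sum_mul_sum, ← Finset.sum_product (f := fun p : Finset (Fin n) × Finset (Fin n) =>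
    q ^ p.1.card * (1 - q) ^ ((n - K.card) - p.1.card) * (q ^ p.2.card * (1 - q) ^ (K.card - p.2.card)))]
  have heq : ∀ p ∈ S ×ˢ T,
      (q ^ p.1.card * (1 - q) ^ ((n - K.card) - p.1.card)) *
        (q ^ p.2.card * (1 - q) ^ (K.card - p.2.card))
      = q ^ (p.1 ∪ p.2).card * (1 - q) ^ (n - (p.1 ∪ p.2).card) := by
    rintro ⟨A, B⟩ hp
    rw [mem_product] at hp
    have hA := hS A hp.1
    have hB := hT B hp.2
    have hcA : A.card ≤ n - K.card := hcardsd ▸ card_le_card hA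
    have hcB : B.card ≤ K.card := card_le_card hB
    rw [card_union_of_disjoint (hdisj A hp.1 B hp.2)]
    have : n - (A.card + B.card) = ((n - K.card) - A.card) + (K.card - B.card) := by omega
    rw [this, pow_add, pow_add]
    ring
  rw [Finset.sum_congr rfl heq, ← Finset.sum_image (f := fun A : Finset (Fin n) => q ^ A.card * (1 - q) ^ (n - A.card)) hinj]
  apply Finset.sum_le_sum_of_subset_of_nonneg
  · intro A hA
    rw [mem_image] at hA
    obtain ⟨p, hp, rfl⟩ := hA
    rw [mem_product] at hp
    exact hU p.1 hp.1 p.2 hp.2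
  · intro A _ _
    positivity

/-- F ⊆ P([n]) monotone, J ⊆ [n], G ⊆ P(J), q ∈ (0,1), ε > 0.
If μ_q(F Δ ⟨G⟩) < ε²/16 and μ_q(F) ≤ 1 − ε/2, then μ_q(F_J^∅) < ε/4, where
⟨G⟩ = {A : A ∩ J ∈ G} and F_J^∅ = {A ⊆ [n]∖J : A ∈ F} (measured on P([n]∖J)). -/
theorem stmt15 {n : ℕ} (F : Finset (Finset (Fin n)))
    (hmono : ∀ A ∈ F, ∀ B, A ⊆ B → B ∈ F)
    (J : Finset (Fin n)) (G : Finset (Finset (Fin n))) (hG : ∀ B ∈ G, B ⊆ J)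
    (q ε : ℝ) (hq0 : 0 < q) (hq1 : q < 1) (hε : 0 < ε)
    (hsym : ∑ A ∈ symmDiff F
        ((univ : Finset (Fin n)).powerset.filter (fun A => A ∩ J ∈ G)),
        q ^ A.card * (1 - q) ^ (n - A.card) < ε ^ 2 / 16)
    (hsmall : ∑ A ∈ F, q ^ A.card * (1 - q) ^ (n - A.card) ≤ 1 - ε / 2) :
    ∑ A ∈ ((univ : Finset (Fin n)) \ J).powerset.filter (fun A => A ∈ F),
        q ^ A.card * (1 - q) ^ ((n - J.card) - A.card) < ε / 4 := by
  by_contra hcon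
  push_neg at hcon
  have hq0' : (0:ℝ) ≤ q := le_of_lt hq0
  have h1q : (0:ℝ) ≤ 1 - q := by linarith
  set GF := (univ : Finset (Fin n)).powerset.filter (fun A => A ∩ J ∈ G) with hGFdef
  set σ := ∑ A ∈ symmDiff F GF, q ^ A.card * (1 - q) ^ (n - A.card) with hσdef
  set μF := ∑ A ∈ F, q ^ A.card * (1 - q) ^ (n - A.card) with hμFdef
  -- ε ≤ 2
  have hμF0 : 0 ≤ μF := Finset.sum_nonneg (fun A _ => by positivity)
  have hε2 : ε ≤ 2 := by linarith
  set S₀ := ((univ : Finset (Fin n)) \ J).powerset.filter (fun A => A ∈ F) with hS₀def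
  set T := J.powerset.filter (fun B => ¬ B ∈ G) with hTdef
  set m := ∑ A ∈ S₀, q ^ A.card * (1 - q) ^ ((n - J.card) - A.card) with hmdef
  set t := ∑ B ∈ T, q ^ B.card * (1 - q) ^ (J.card - B.card) with htdef
  set μG := ∑ B ∈ G, q ^ B.card * (1 - q) ^ (J.card - B.card) with hμGdef
  have hS₀ : ∀ A ∈ S₀, A ⊆ univ \ J := fun A hA => mem_powerset.mp (mem_filter.mp hA).1
  -- key 1 : m * t ≤ σ
  have key1 : m * t ≤ σ := by
    apply key q hq0' (le_of_lt hq1) J S₀ T _ hS₀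
      (fun B hB => mem_powerset.mp (mem_filter.mp hB).1)
    intro A hA B hB
    have hAF : A ∈ F := (mem_filter.mp hA).2
    have hBG : B ∉ G := (mem_filter.mp hB).2
    have hABF : A ∪ B ∈ F := hmono A hAF _ subset_union_left
    have hBJ : B ⊆ J := mem_powerset.mp (mem_filter.mp hB).1
    have hint : (A ∪ B) ∩ J = B := by
      have hAJ : Disjoint A J :=
        disjoint_left.mpr (fun a ha => (mem_sdiff.mp (hS₀ A hA ha)).2)
      rw [union_inter_distrib_right, disjoint_iff_inter_eq_empty.mp hAJ,
        inter_eq_left.mpr hBJ, empty_union]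
    rw [Finset.mem_symmDiff]
    left
    refine ⟨hABF, ?_⟩
    rw [hGFdef, mem_filter]
    rw [hint]
    tauto
  -- key 2 : μG ≤ ∑ GF
  have hcardsd : ((univ : Finset (Fin n)) \ J).card = n - J.card := by
    rw [card_sdiff_of_subset (subset_univ J)]; simp
  have key2 : μG ≤ ∑ A ∈ GF, q ^ A.card * (1 - q) ^ (n - A.card) := by
    have h1 : ∑ A ∈ ((univ : Finset (Fin n)) \ J).powerset,
        q ^ A.card * (1 - q) ^ ((n - J.card) - A.card) = 1 := by
      rw [show n - J.card = ((univ : Finset (Fin n)) \ J).card from hcardsd.symm]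
      exact wsum_one q _
    have := key q hq0' (le_of_lt hq1) J ((univ : Finset (Fin n)) \ J).powerset G GF
      (fun A hA => mem_powerset.mp hA) hG ?_
    · rw [h1, one_mul] at this; exact this
    · intro A hA B hB
      have hAJ : Disjoint A J :=
        disjoint_left.mpr (fun a ha => (mem_sdiff.mp (mem_powerset.mp hA ha)).2)
      have hint : (A ∪ B) ∩ J = B := by
        rw [union_inter_distrib_right, disjoint_iff_inter_eq_empty.mp hAJ,
          inter_eq_left.mpr (hG B hB), empty_union]
      rw [hGFdef, mem_filter, hint]
      exact ⟨mem_powerset.mpr (subset_univ _), hB⟩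
  -- t = 1 - μG
  have hsplit : μG + t = 1 := by
    have h := Finset.sum_filter_add_sum_filter_not J.powerset (fun B => B ∈ G)
      (fun B => q ^ B.card * (1 - q) ^ (J.card - B.card))
    have hfG : J.powerset.filter (fun B => B ∈ G) = G := by
      rw [Finset.filter_mem_eq_inter]
      exact inter_eq_right.mpr (fun B hB => mem_powerset.mpr (hG B hB))
    rw [hfG, wsum_one q J] at h
    exact h
  -- ∑ GF ≤ μF + σ
  have hGFle : ∑ A ∈ GF, q ^ A.card * (1 - q) ^ (n - A.card) ≤ μF + σ := by
    have h := Finset.sum_filter_add_sum_filter_not GF (fun A => A ∈ F)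
      (fun A => q ^ A.card * (1 - q) ^ (n - A.card))
    rw [← h]
    gcongr
    · apply Finset.sum_le_sum_of_subset_of_nonneg
      · exact fun A hA => (mem_filter.mp hA).2
      · intro A _ _; positivity
    · apply Finset.sum_le_sum_of_subset_of_nonneg
      · intro A hA
        rw [Finset.mem_symmDiff]
        exact Or.inr ⟨(mem_filter.mp hA).1, (mem_filter.mp hA).2⟩
      · intro A _ _; positivity
  -- assemble
  have ht : ε / 2 - σ ≤ t := by linarith
  have hσ0 : 0 ≤ σ := Finset.sum_nonneg (fun A _ => by positivity)
  have htpos : 0 ≤ t := by nlinarith [hsym, hε, hε2, ht]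
  have h1 : (ε/4) * t ≤ m * t := mul_le_mul_of_nonneg_right hcon htpos
  have h2 : (ε/4) * (ε/2 - σ) ≤ (ε/4) * t := by
    apply mul_le_mul_of_nonneg_left ht (by linarith)
  nlinarith [h1, h2, key1, hsym, hσ0, hε, hε2, mul_pos hε hε,
    mul_nonneg hσ0 (by linarith : (0:ℝ) ≤ 2 - ε)]
end
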